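/- For the random unitary qubit generator Lρ = ∑_{k=1}^3 γ_k(σ_k ρ σ_k − ρ) with γ_k ≥ 0, the induced generator on the 6-dimensional tomographic probability vector decomposes as 𝕄 = M^{(x)} ⊕ M^{(y)} ⊕ M^{(z)}, where M^{(α)} = γ_α(σ_x − I₂) as a real 2×2 matrix, with γ_x = γ₂+γ₃, γ_y = γ₁+γ₃, γ_z = γ₁+γ₂; in particular each block satisfies the Kolmogorov conditions and 𝕄 generates a stochastic semigroup. -/

import Mathlib

open Matrix

/-- A real square matrix is column-stochastic. -/
def IsColStochastic {n : Type*} [Fintype n] (T : Matrix n n ℝ) : Prop :=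
  (∀ i j, 0 ≤ T i j) ∧ ∀ j, ∑ i, T i j = 1

/-- Kolmogorov conditions for a generator. -/
def IsKolmogorov {n : Type*} [Fintype n] [DecidableEq n] (M : Matrix n n ℝ) : Prop :=
  (∀ i j, i ≠ j → 0 ≤ M i j) ∧ ∀ j, ∑ i, M i j = 0

/-- The 2×2 Kolmogorov block `γ • (σx − I)`. -/
noncomputable def block (γ : ℝ) : Matrix (Fin 2) (Fin 2) ℝ := γ • !![-1, 1; 1, -1]

/-!
Each Bloch component decays on its own, `r_α' = -2 γ_α r_α`, so the two populations
`π_α (1 ± r_α) / 2` obey the two-state master equation with rate `γ_α`, whose generator is the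
block `γ_α (σ_x - I)`; a direct sum of such blocks is again a Kolmogorov matrix.
For a Kolmogorov matrix `M`, the column sums of `M ^ k` vanish for `k ≥ 1`, so those of `exp M`
equal `1`; and `M + c • 1` is entrywise nonnegative for large `c`, so
`exp M = e^{-c} exp (M + c • 1)` is entrywise nonnegative.
-/

namespace Matrix

theorem blockDiagonal_mulVec_apply {n m o R : Type*} [Fintype m] [Fintype o] [DecidableEq o]
    [NonUnitalNonAssocSemiring R] (f : o → Matrix n m R) (v : m × o → R) (i : n) (α : o) :
    (blockDiagonal f *ᵥ v) (i, α) = (f α *ᵥ fun j => v (j, α)) i := by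
  simp [mulVec, dotProduct, Fintype.sum_prod_type, blockDiagonal_apply]

variable {n : Type*} [Fintype n] [DecidableEq n]

theorem hasSum_exp_apply (A : Matrix n n ℝ) (i j : n) :
    HasSum (fun k : ℕ => (k.factorial : ℝ)⁻¹ * (A ^ k) i j) (NormedSpace.exp A i j) := by
  have h := open scoped Norms.Operator in NormedSpace.exp_series_hasSum_exp' (𝕂 := ℝ) A
  exact Pi.hasSum.mp (Pi.hasSum.mp h i) j

theorem exp_smul_one (c : ℝ) :
    NormedSpace.exp (c • (1 : Matrix n n ℝ)) = Real.exp c • 1 := by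
  rw [← Algebra.algebraMap_eq_smul_one, ← Algebra.algebraMap_eq_smul_one, Real.exp_eq_exp_ℝ]
  exact (open scoped Norms.Operator in
    NormedSpace.algebraMap_exp_comm (𝔸 := Matrix n n ℝ) c).symm

theorem exp_apply_nonneg {B : Matrix n n ℝ} (hB : ∀ i j, 0 ≤ B i j) (i j : n) :
    0 ≤ NormedSpace.exp B i j :=
  (hasSum_exp_apply B i j).nonneg fun k => mul_nonneg (by positivity) (pow_apply_nonneg hB k i j)

theorem exp_apply_nonneg_of_offDiag_nonneg {A : Matrix n n ℝ}
    (hA : ∀ i j, i ≠ j → 0 ≤ A i j) (i j : n) : 0 ≤ NormedSpace.exp A i j := by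
  set c := ∑ l, |A l l|
  have hshift : ∀ i j, 0 ≤ (A + c • 1) i j := by
    intro i j
    rcases eq_or_ne i j with rfl | hij
    · have hc : |A i i| ≤ c :=
        Finset.single_le_sum (fun l _ => abs_nonneg (A l l)) (Finset.mem_univ i)
      simp only [add_apply, smul_apply, one_apply_eq, smul_eq_mul, mul_one]
      linarith [neg_abs_le (A i i)]
    · simpa [one_apply_ne hij] using hA i j hij
  have hexp : NormedSpace.exp A = Real.exp (-c) • NormedSpace.exp (A + c • 1) := by
    rw [← smul_one_mul, ← exp_smul_one,
      ← exp_add_of_commute _ _ ((Commute.one_left _).smul_left _)]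
    congr 1
    module
  rw [hexp, smul_apply, smul_eq_mul]
  exact mul_nonneg (Real.exp_nonneg _) (exp_apply_nonneg hshift i j)

theorem sum_pow_succ_apply_of_sum_eq_zero {A : Matrix n n ℝ} (hA : ∀ j, ∑ i, A i j = 0)
    (k : ℕ) (j : n) : ∑ i, (A ^ (k + 1)) i j = 0 := by
  simp only [pow_succ', mul_apply]
  rw [Finset.sum_comm]
  simp [← Finset.sum_mul, hA]

theorem sum_exp_apply_of_sum_eq_zero {A : Matrix n n ℝ} (hA : ∀ j, ∑ i, A i j = 0) (j : n) :
    ∑ i, NormedSpace.exp A i j = 1 := by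
  have hsum := hasSum_sum fun i (_ : i ∈ Finset.univ) => hasSum_exp_apply A i j
  refine hsum.unique ?_
  convert hasSum_single 0 fun k hk => ?_
  · simp [one_apply]
  · obtain ⟨k, rfl⟩ := Nat.exists_eq_succ_of_ne_zero hk
    rw [← Finset.mul_sum, sum_pow_succ_apply_of_sum_eq_zero hA, mul_zero]

end Matrix

section Kolmogorov

variable {n : Type*} [Fintype n] [DecidableEq n] {M : Matrix n n ℝ}

theorem IsKolmogorov.smul (hM : IsKolmogorov M) {t : ℝ} (ht : 0 ≤ t) : IsKolmogorov (t • M) :=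
  ⟨fun i j hij => mul_nonneg ht (hM.1 i j hij), fun j => by
    simp only [Matrix.smul_apply, smul_eq_mul, ← Finset.mul_sum, hM.2 j, mul_zero]⟩

theorem IsKolmogorov.isColStochastic_exp (hM : IsKolmogorov M) :
    IsColStochastic (NormedSpace.exp M) :=
  ⟨exp_apply_nonneg_of_offDiag_nonneg hM.1, sum_exp_apply_of_sum_eq_zero hM.2⟩

theorem IsKolmogorov.blockDiagonal {o : Type*} [Fintype o] [DecidableEq o]
    {f : o → Matrix n n ℝ} (hf : ∀ α, IsKolmogorov (f α)) :
    IsKolmogorov (Matrix.blockDiagonal f) := by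
  constructor
  · rintro ⟨i, α⟩ ⟨j, β⟩ hne
    rw [blockDiagonal_apply]
    split_ifs with hαβ
    · subst hαβ
      exact (hf α).1 i j fun hij => hne (hij ▸ rfl)
    · exact le_rfl
  · rintro ⟨j, α⟩
    simpa [Fintype.sum_prod_type, blockDiagonal_apply] using (hf α).2 j

end Kolmogorov

theorem isKolmogorov_block {γ : ℝ} (hγ : 0 ≤ γ) : IsKolmogorov (block γ) := by
  refine ⟨fun i j hij => ?_, fun j => ?_⟩
  · fin_cases i <;> fin_cases j <;> simp_all [block]
  · fin_cases j <;> simp [block, Fin.sum_univ_two]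

theorem block_mulVec (γ : ℝ) (v : Fin 2 → ℝ) :
    block γ *ᵥ v = ![γ * (v 1 - v 0), γ * (v 0 - v 1)] := by
  ext i
  fin_cases i <;> simp [block, mulVec, dotProduct, Fin.sum_univ_two] <;> ring

theorem hasDerivAt_populations {π γ : ℝ} {r : ℝ → ℝ} {t : ℝ}
    (hr : HasDerivAt r (-2 * γ * r t) t) :
    HasDerivAt (fun s => π * (1 + r s) / 2) (γ * (π * (1 - r t) / 2 - π * (1 + r t) / 2)) t ∧
    HasDerivAt (fun s => π * (1 - r s) / 2) (γ * (π * (1 + r t) / 2 - π * (1 - r t) / 2)) t :=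
  ⟨(((hr.const_add 1).const_mul π).div_const 2).congr_deriv (by ring),
    (((hr.const_sub 1).const_mul π).div_const 2).congr_deriv (by ring)⟩

theorem random_unitary_generator_stochastic_general (γ₁ γ₂ γ₃ : ℝ)
    (hγ₁ : 0 ≤ γ₁) (hγ₂ : 0 ≤ γ₂) (hγ₃ : 0 ≤ γ₃)
    (πx πy πz : ℝ)
    (γv : Fin 3 → ℝ) (hγv : γv = ![γ₂ + γ₃, γ₁ + γ₃, γ₁ + γ₂])
    (𝕄 : Matrix (Fin 2 × Fin 3) (Fin 2 × Fin 3) ℝ)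
    (h𝕄 : 𝕄 = Matrix.blockDiagonal fun α : Fin 3 => block (γv α))
    -- the tomographic coordinates `P` built from a Bloch trajectory `r`
    (r : ℝ → Fin 3 → ℝ)
    (hr : ∀ t, ∀ α : Fin 3, HasDerivAt (fun s => r s α) (-2 * γv α * r t α) t)
    (P : ℝ → Fin 2 × Fin 3 → ℝ)
    (hP : ∀ t α, P t (0, α) = ![πx, πy, πz] α * (1 + r t α) / 2 ∧
                 P t (1, α) = ![πx, πy, πz] α * (1 - r t α) / 2) :
    (∀ t i, HasDerivAt (fun s => P s i) (𝕄.mulVec (P t) i) t) ∧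
    (∀ α : Fin 3, IsKolmogorov (block (γv α))) ∧
    IsKolmogorov 𝕄 ∧
    (∀ t : ℝ, 0 ≤ t → IsColStochastic (NormedSpace.exp (t • 𝕄))) := by
  have hblocks : ∀ α, IsKolmogorov (block (γv α)) := by
    intro α
    apply isKolmogorov_block
    fin_cases α <;> simp [hγv] <;> linarith
  have h𝕄K : IsKolmogorov 𝕄 := h𝕄 ▸ IsKolmogorov.blockDiagonal hblocks
  refine ⟨?_, hblocks, h𝕄K, fun t ht => (h𝕄K.smul ht).isColStochastic_exp⟩
  rintro t ⟨i, α⟩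
  have hP0 : (fun s => P s (0, α)) = fun s => ![πx, πy, πz] α * (1 + r s α) / 2 :=
    funext fun s => (hP s α).1
  have hP1 : (fun s => P s (1, α)) = fun s => ![πx, πy, πz] α * (1 - r s α) / 2 :=
    funext fun s => (hP s α).2
  obtain ⟨hd0, hd1⟩ := hasDerivAt_populations (π := ![πx, πy, πz] α) (hr t α)
  rw [h𝕄, blockDiagonal_mulVec_apply, block_mulVec]
  fin_cases i
  · simpa [hP0, (hP t α).1, (hP t α).2] using hd0
  · simpa [hP1, (hP t α).1, (hP t α).2] using hd1

theorem random_unitary_generator_stochastic (γ₁ γ₂ γ₃ : ℝ)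
    (hγ₁ : 0 ≤ γ₁) (hγ₂ : 0 ≤ γ₂) (hγ₃ : 0 ≤ γ₃)
    (πx πy πz : ℝ) (hπx : 0 < πx) (hπy : 0 < πy) (hπz : 0 < πz)
    (γv : Fin 3 → ℝ) (hγv : γv = ![γ₂ + γ₃, γ₁ + γ₃, γ₁ + γ₂])
    (𝕄 : Matrix (Fin 2 × Fin 3) (Fin 2 × Fin 3) ℝ)
    (h𝕄 : 𝕄 = Matrix.blockDiagonal fun α : Fin 3 => block (γv α))
    -- the tomographic coordinates `P` built from a Bloch trajectory `r`
    (r : ℝ → Fin 3 → ℝ)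
    (hr : ∀ t, ∀ α : Fin 3, HasDerivAt (fun s => r s α) (-2 * γv α * r t α) t)
    (P : ℝ → Fin 2 × Fin 3 → ℝ)
    (hP : ∀ t α, P t (0, α) = ![πx, πy, πz] α * (1 + r t α) / 2 ∧
                 P t (1, α) = ![πx, πy, πz] α * (1 - r t α) / 2) :
    (∀ t i, HasDerivAt (fun s => P s i) (𝕄.mulVec (P t) i) t) ∧
    (∀ α : Fin 3, IsKolmogorov (block (γv α))) ∧
    IsKolmogorov 𝕄 ∧
    (∀ t : ℝ, 0 ≤ t → IsColStochastic (NormedSpace.exp (t • 𝕄))) :=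
  random_unitary_generator_stochastic_general γ₁ γ₂ γ₃ hγ₁ hγ₂ hγ₃ πx πy πz γv hγv 𝕄 h𝕄 r hr P hP
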